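/- Let r ≥ 2 and s > r. Let α, β, γ > 0 with α > γ and satisfying (r-1)α² = (r-1)β² + (s-r)γ². Define E = 1 + (r-1)α², and probability distributions p = (1/E, α²/E, ..., α²/E) with r-1 copies of α²/E, and q = (1/E, β²/E, ..., β²/E, γ²/E, ..., γ²/E) with r-1 copies of β²/E and s-r copies of γ²/E. Then the Shannon entropy of q is strictly greater than that of p: -∑ qᵢ log qᵢ > -∑ pᵢ log pᵢ. -/

import Mathlib

open Real

/-- Splitting the minor singular-value mass of a two-step spectrum (LoRA) into a
three-step spectrum (DoRA) with the same normalizing constant strictly increases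
the Shannon entropy of the induced probability distribution. -/
theorem dora_entropy_gt_lora_entropy
    (r s : ℕ) (hr : 2 ≤ r) (hs : r < s)
    (α β γ : ℝ) (hα : 0 < α) (hβ : 0 < β) (hγ : 0 < γ) (hαγ : γ < α)
    (hcon : ((r : ℝ) - 1) * α ^ 2 = ((r : ℝ) - 1) * β ^ 2 + ((s : ℝ) - (r : ℝ)) * γ ^ 2)
    (E : ℝ) (hE : E = 1 + ((r : ℝ) - 1) * α ^ 2) :
    -((1 / E) * Real.log (1 / E)
        + ((r : ℝ) - 1) * ((β ^ 2 / E) * Real.log (β ^ 2 / E))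
        + ((s : ℝ) - (r : ℝ)) * ((γ ^ 2 / E) * Real.log (γ ^ 2 / E)))
      >
    -((1 / E) * Real.log (1 / E)
        + ((r : ℝ) - 1) * ((α ^ 2 / E) * Real.log (α ^ 2 / E))) := by
  have hr1' : (0 : ℝ) < (r : ℝ) - 1 := by
    have : (2 : ℝ) ≤ (r : ℝ) := by exact_mod_cast hr
    linarith
  have hsr : (0 : ℝ) < (s : ℝ) - (r : ℝ) := by
    have : (r : ℝ) < (s : ℝ) := by exact_mod_cast hs
    linarith
  have hEpos : 0 < E := by
    have : 0 < α ^ 2 := by positivity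
    nlinarith
  have hβα : β ^ 2 < α ^ 2 := by
    nlinarith [mul_pos hsr (pow_pos hγ 2)]
  have hγα : γ ^ 2 < α ^ 2 := by nlinarith
  have hb : 0 < β ^ 2 / E := by positivity
  have hc : 0 < γ ^ 2 / E := by positivity
  have hba : β ^ 2 / E < α ^ 2 / E := by gcongr
  have hca : γ ^ 2 / E < α ^ 2 / E := by gcongr
  have h1 : (β ^ 2 / E) * Real.log (β ^ 2 / E) < (β ^ 2 / E) * Real.log (α ^ 2 / E) :=
    mul_lt_mul_of_pos_left (Real.log_lt_log hb hba) hb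
  have h2 : (γ ^ 2 / E) * Real.log (γ ^ 2 / E) < (γ ^ 2 / E) * Real.log (α ^ 2 / E) :=
    mul_lt_mul_of_pos_left (Real.log_lt_log hc hca) hc
  have hA := mul_lt_mul_of_pos_left h1 hr1'
  have hB := mul_lt_mul_of_pos_left h2 hsr
  have hsum : ((r : ℝ) - 1) * (β ^ 2 / E) + ((s : ℝ) - (r : ℝ)) * (γ ^ 2 / E)
      = ((r : ℝ) - 1) * (α ^ 2 / E) := by
    field_simp
    linarith
  have hkey := congrArg (· * Real.log (α ^ 2 / E)) hsum
  nlinarith [hA, hB, hkey]
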